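/- arXiv:2509.25438 — 2 statements merged into one kernel-verified Lean document; each statement's English description precedes it below -/
import Mathlib

section
/- Suppose log p(D|θ) = −c·log MSE(θ) + const(D) with c > 0, MSE(θ) > 0 for all θ. Define the intrinsic reward r = E_{p(θ)}[log MSE(θ)] − log MSE(θ_D) where θ_D satisfies log p(D|θ_D) ≥ E_{p(θ|D)}[log p(D|θ)]. Then r ≥ (1/c)·IG, where IG = KL(p(θ|D) ‖ p(θ)). -/
open MeasureTheory Real

/-- Monotone lower bound of the LPM intrinsic reward by information gain:
under `log p(D|θ) = −c·log MSE(θ) + k` with `c > 0`, and θ_D satisfying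
`log p(D|θ_D) ≥ E_{post}[log p(D|θ)]`, the reward
`r = E_{prior}[log MSE] − log MSE(θ_D)` satisfies `r ≥ (1/c)·IG`, where
`IG = E_{post}[log p(D|θ)] − log p(D) = KL(post‖prior)`. -/
theorem reward_ge_info_gain {Θ : Type*} [MeasurableSpace Θ] (μ : Measure Θ)
    (prior like post MSE : Θ → ℝ) (pD c k : ℝ) (θD : Θ)
    (hc : 0 < c)
    (hprior_nonneg : ∀ θ, 0 ≤ prior θ)
    (hlike_pos : ∀ θ, 0 < like θ)
    (hMSE_pos : ∀ θ, 0 < MSE θ)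
    (hprior_prob : ∫ θ, prior θ ∂μ = 1)
    (hpD : pD = ∫ θ, like θ * prior θ ∂μ)
    (hpD_pos : 0 < pD)
    (hpost : ∀ θ, post θ = like θ * prior θ / pD)
    (hmodel : ∀ θ, Real.log (like θ) = -c * Real.log (MSE θ) + k)
    (hθD : (∫ θ, post θ * Real.log (like θ) ∂μ) ≤ Real.log (like θD))
    (hint1 : Integrable (fun θ => like θ * prior θ) μ)
    (hint2 : Integrable (fun θ => prior θ * Real.log (MSE θ)) μ)
    (hint3 : Integrable (fun θ => post θ * Real.log (like θ)) μ) :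
    (1 / c) * ((∫ θ, post θ * Real.log (like θ) ∂μ) - Real.log pD)
      ≤ (∫ θ, prior θ * Real.log (MSE θ) ∂μ) - Real.log (MSE θD) := by
  -- prior is integrable since its integral is 1
  have hPrior_int : Integrable prior μ := by
    by_contra h
    rw [integral_undef h] at hprior_prob
    linarith
  -- prior * log like rewritten
  have hfun : (fun θ => prior θ * Real.log (like θ))
      = fun θ => k * prior θ - c * (prior θ * Real.log (MSE θ)) := by
    funext θ; rw [hmodel θ]; ring
  have hA_int : Integrable (fun θ => prior θ * Real.log (like θ)) μ := by
    rw [hfun]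
    exact ((hPrior_int.const_mul k).sub (hint2.const_mul c))
  set A := ∫ θ, prior θ * Real.log (like θ) ∂μ with hAdef
  set B := ∫ θ, post θ * Real.log (like θ) ∂μ with hBdef
  set M := ∫ θ, prior θ * Real.log (MSE θ) ∂μ with hMdef
  have e1 : A = k - c * M := by
    rw [hAdef, hfun, integral_sub (hPrior_int.const_mul k) (hint2.const_mul c),
      integral_const_mul, integral_const_mul, hprior_prob]
    ring
  -- Jensen-type bound: A ≤ log pD
  have hg_int : Integrable
      (fun θ => prior θ * Real.log pD + (prior θ * like θ) / pD - prior θ) μ := by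
    have h1 : Integrable (fun θ => prior θ * like θ) μ := by
      simpa [mul_comm] using hint1
    exact ((hPrior_int.mul_const _).add (h1.div_const pD)).sub hPrior_int
  have hpt : ∀ θ, prior θ * Real.log (like θ)
      ≤ prior θ * Real.log pD + (prior θ * like θ) / pD - prior θ := by
    intro θ
    have hl := Real.log_le_sub_one_of_pos (div_pos (hlike_pos θ) hpD_pos)
    rw [Real.log_div (ne_of_gt (hlike_pos θ)) (ne_of_gt hpD_pos)] at hl
    have : Real.log (like θ) ≤ Real.log pD + like θ / pD - 1 := by linarith
    have h2 := mul_le_mul_of_nonneg_left this (hprior_nonneg θ)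
    calc prior θ * Real.log (like θ)
        ≤ prior θ * (Real.log pD + like θ / pD - 1) := h2
      _ = prior θ * Real.log pD + (prior θ * like θ) / pD - prior θ := by ring
  have hprlike : Integrable (fun θ => prior θ * like θ) μ := by
    simpa [mul_comm] using hint1
  have e3 : A ≤ Real.log pD := by
    have := integral_mono hA_int hg_int hpt
    have hadd_int : Integrable (fun θ => prior θ * Real.log pD + prior θ * like θ / pD) μ :=
      (hPrior_int.mul_const (Real.log pD)).add (hprlike.div_const pD)
    rw [integral_sub hadd_int hPrior_int,
      integral_add (hPrior_int.mul_const (Real.log pD)) (hprlike.div_const pD),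
      integral_mul_const, integral_div, hprior_prob] at this
    have hint1' : (∫ θ, prior θ * like θ ∂μ) = pD := by
      rw [hpD]; exact integral_congr_ae (Filter.Eventually.of_forall fun θ => mul_comm _ _)
    rw [hint1', div_self (ne_of_gt hpD_pos)] at this
    linarith [this]
  -- bound on log MSE θD
  have e2 : c * Real.log (MSE θD) = k - Real.log (like θD) := by
    have := hmodel θD; linarith
  rw [one_div, inv_mul_le_iff₀ hc, mul_sub, e2]
  nlinarith [hθD, e3, e1]
end

section
/- Gaussian i.i.d. case: for the model y_i = f(x_i; θ) + ε_i with ε_i ~ N(0, MSE(θ)) independent for i = 1,…,n, the log-likelihood satisfies log p(D|θ) = −(n/2)·log MSE(θ) + const(D), and consequently, taking θ_D to be the MLE, the intrinsic reward r = E_{p(θ)}[log MSE(θ)] − log MSE(θ_D) satisfies r ≥ (2/n)·KL(p(θ|D) ‖ p(θ)). -/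
open MeasureTheory Real Finset

/-!
The Gaussian log-likelihood with the plugged-in variance `MSE θ` is affine in `log (MSE θ)`
with slope `-n/2`, since the quadratic term collapses to `-n/2`. For the posterior
`L θ * prior θ / Z`, on the support of the prior one has `log (post / prior) = log L - log Z`,
so the KL divergence is at most `log L(θ_D) - log Z`; and Jensen's inequality for the concave
`log` (in the form `log t ≤ t - 1`) gives `E_prior[log L] ≤ log Z`. Hence
`KL ≤ log L(θ_D) - E_prior[log L] = (n/2) (E_prior[log MSE] - log MSE(θ_D))`.
-/

theorem log_prod_gaussian_density {ι : Type*} [Fintype ι] {v : ℝ} (hv : 0 < v) (r : ι → ℝ) :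
    Real.log (∏ i, (√(2 * π * v))⁻¹ * rexp (-r i ^ 2 / (2 * v))) =
      -(Fintype.card ι / 2 : ℝ) * Real.log (2 * π * v) - (∑ i, r i ^ 2) / (2 * v) := by
  have h2πv : 0 < 2 * π * v := by positivity
  rw [Real.log_prod fun i _ => by positivity]
  have hterm : ∀ i, Real.log ((√(2 * π * v))⁻¹ * rexp (-r i ^ 2 / (2 * v))) =
      -(1 / 2) * Real.log (2 * π * v) - r i ^ 2 / (2 * v) := fun i => by
    rw [Real.log_mul (by positivity) (exp_ne_zero _), Real.log_inv, Real.log_sqrt h2πv.le,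
      Real.log_exp]
    ring
  simp only [hterm, sum_sub_distrib, sum_const, card_univ, nsmul_eq_mul, sum_div]
  ring

theorem log_prod_gaussian_density_of_mean_sq {ι : Type*} [Fintype ι] {v : ℝ} (hv : 0 < v)
    (r : ι → ℝ) (hvr : v = 1 / (Fintype.card ι : ℝ) * ∑ i, r i ^ 2) :
    Real.log (∏ i, (√(2 * π * v))⁻¹ * rexp (-r i ^ 2 / (2 * v))) =
      -(Fintype.card ι / 2 : ℝ) * Real.log v +
        (-(Fintype.card ι / 2 : ℝ) - (Fintype.card ι / 2 : ℝ) * Real.log (2 * π)) := by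
  have hcard : (Fintype.card ι : ℝ) ≠ 0 := by
    rintro hcard
    rw [hcard, div_zero, zero_mul] at hvr
    exact hv.ne' hvr
  have hsum : ∑ i, r i ^ 2 = Fintype.card ι * v := by
    rw [hvr]
    field_simp
  rw [log_prod_gaussian_density hv, hsum, Real.log_mul (by positivity) hv.ne']
  field_simp
  ring

section BayesianUpdate

variable {Θ : Type*} [MeasurableSpace Θ] {μ : Measure Θ} {prior L : Θ → ℝ}

noncomputable def posterior (μ : Measure Θ) (prior L : Θ → ℝ) (θ : Θ) : ℝ :=
  L θ * prior θ / ∫ θ', L θ' * prior θ' ∂μ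

theorem integral_mul_log_le_log_integral (hprior_nonneg : ∀ θ, 0 ≤ prior θ)
    (hprior_prob : ∫ θ, prior θ ∂μ = 1) (hL : ∀ θ, 0 < L θ)
    (hZ : 0 < ∫ θ, L θ * prior θ ∂μ) (hLprior : Integrable (fun θ => L θ * prior θ) μ)
    (hlogL : Integrable (fun θ => prior θ * Real.log (L θ)) μ) :
    ∫ θ, prior θ * Real.log (L θ) ∂μ ≤ Real.log (∫ θ, L θ * prior θ ∂μ) := by
  set Z := ∫ θ, L θ * prior θ ∂μ
  have hprior_int : Integrable prior μ := .of_integral_ne_zero (by simp [hprior_prob])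
  have hpointwise : ∀ θ, prior θ * Real.log (L θ) ≤
      (Real.log Z - 1) * prior θ + L θ * prior θ / Z := fun θ => by
    have h := Real.log_le_sub_one_of_pos (div_pos (hL θ) hZ)
    rw [Real.log_div (hL θ).ne' hZ.ne'] at h
    calc prior θ * Real.log (L θ)
        ≤ prior θ * (Real.log Z + (L θ / Z - 1)) :=
          mul_le_mul_of_nonneg_left (by linarith) (hprior_nonneg θ)
      _ = (Real.log Z - 1) * prior θ + L θ * prior θ / Z := by ring
  calc ∫ θ, prior θ * Real.log (L θ) ∂μ
      ≤ ∫ θ, ((Real.log Z - 1) * prior θ + L θ * prior θ / Z) ∂μ :=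
        integral_mono hlogL ((hprior_int.const_mul _).add (hLprior.div_const _)) hpointwise
    _ = Real.log Z := by
        rw [integral_add (hprior_int.const_mul _) (hLprior.div_const _), integral_const_mul,
          integral_div, hprior_prob, div_self hZ.ne']
        ring

theorem integral_posterior_mul_log_le_log_max (θD : Θ) (hprior_nonneg : ∀ θ, 0 ≤ prior θ)
    (hL : ∀ θ, 0 < L θ) (hLmax : ∀ θ, L θ ≤ L θD) (hZ : 0 < ∫ θ, L θ * prior θ ∂μ)
    (hLprior : Integrable (fun θ => L θ * prior θ) μ)
    (hKL : Integrable (fun θ => posterior μ prior L θ *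
      Real.log (posterior μ prior L θ / prior θ)) μ) :
    ∫ θ, posterior μ prior L θ * Real.log (posterior μ prior L θ / prior θ) ∂μ ≤
      Real.log (L θD) - Real.log (∫ θ, L θ * prior θ ∂μ) := by
  set Z := ∫ θ, L θ * prior θ ∂μ
  have hpointwise : ∀ θ, posterior μ prior L θ * Real.log (posterior μ prior L θ / prior θ) ≤
      posterior μ prior L θ * (Real.log (L θD) - Real.log Z) := fun θ => by
    rcases (hprior_nonneg θ).eq_or_lt with hzero | hpos
    · simp [posterior, ← hzero]
    have hratio : posterior μ prior L θ / prior θ = L θ / Z := by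
      show L θ * prior θ / Z / prior θ = L θ / Z
      field_simp
    rw [hratio, Real.log_div (hL θ).ne' hZ.ne']
    gcongr
    · exact div_nonneg (mul_nonneg (hL θ).le hpos.le) hZ.le
    · exact hL θ
    · exact hLmax θ
  calc ∫ θ, posterior μ prior L θ * Real.log (posterior μ prior L θ / prior θ) ∂μ
      ≤ ∫ θ, posterior μ prior L θ * (Real.log (L θD) - Real.log Z) ∂μ :=
        integral_mono hKL ((hLprior.div_const _).mul_const _) hpointwise
    _ = Real.log (L θD) - Real.log Z := by
        simp only [posterior, integral_mul_const, integral_div, div_self hZ.ne', one_mul, Z]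

theorem integral_posterior_mul_log_le (θD : Θ) (hprior_nonneg : ∀ θ, 0 ≤ prior θ)
    (hprior_prob : ∫ θ, prior θ ∂μ = 1) (hL : ∀ θ, 0 < L θ) (hLmax : ∀ θ, L θ ≤ L θD)
    (hZ : 0 < ∫ θ, L θ * prior θ ∂μ) (hLprior : Integrable (fun θ => L θ * prior θ) μ)
    (hlogL : Integrable (fun θ => prior θ * Real.log (L θ)) μ)
    (hKL : Integrable (fun θ => posterior μ prior L θ *
      Real.log (posterior μ prior L θ / prior θ)) μ) :
    ∫ θ, posterior μ prior L θ * Real.log (posterior μ prior L θ / prior θ) ∂μ ≤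
      Real.log (L θD) - ∫ θ, prior θ * Real.log (L θ) ∂μ := by
  have hmax := integral_posterior_mul_log_le_log_max θD hprior_nonneg hL hLmax hZ hLprior hKL
  have hJensen :=
    integral_mul_log_le_log_integral hprior_nonneg hprior_prob hL hZ hLprior hlogL
  linarith

theorem integrable_mul_affine {g : Θ → ℝ} (hprior : Integrable prior μ)
    (hg : Integrable (fun θ => prior θ * g θ) μ) (a c : ℝ) :
    Integrable (fun θ => prior θ * (a * g θ + c)) μ := by
  simp_rw [mul_add, mul_left_comm _ a, mul_comm _ c]
  exact (hg.const_mul a).add (hprior.const_mul c)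

theorem integral_mul_affine {g : Θ → ℝ} (hprior_prob : ∫ θ, prior θ ∂μ = 1)
    (hg : Integrable (fun θ => prior θ * g θ) μ) (a c : ℝ) :
    ∫ θ, prior θ * (a * g θ + c) ∂μ = a * (∫ θ, prior θ * g θ ∂μ) + c := by
  have hprior : Integrable prior μ := .of_integral_ne_zero (by simp [hprior_prob])
  simp_rw [mul_add, mul_left_comm _ a, mul_comm _ c]
  rw [integral_add (hg.const_mul a) (hprior.const_mul c), integral_const_mul,
    integral_const_mul, hprior_prob, mul_one]

end BayesianUpdate

/-- Gaussian i.i.d. case: for `y_i = f(x_i;θ) + ε_i`, `ε_i ~ N(0, MSE(θ))` with the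
plugged-in variance `MSE(θ) = (1/n)Σ(y_i − f(x_i;θ))²`, the log-likelihood equals
`−(n/2)·log MSE(θ) + const(D)`, and consequently, with `θ_D` the MLE, the intrinsic
reward `r = E_{prior}[log MSE] − log MSE(θ_D)` satisfies `r ≥ (2/n)·KL(post‖prior)`. -/
theorem gaussian_iid_reward_bound {Θ X : Type*} [MeasurableSpace Θ] (μ : Measure Θ)
    (n : ℕ) (hn : 0 < n) (x : Fin n → X) (y : Fin n → ℝ) (f : Θ → X → ℝ)
    (MSE like prior post : Θ → ℝ) (pD : ℝ) (θD : Θ)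
    (hMSE : ∀ θ, MSE θ = (1 / (n : ℝ)) * ∑ i, (y i - f θ (x i)) ^ 2)
    (hMSE_pos : ∀ θ, 0 < MSE θ)
    (hlike : ∀ θ, like θ =
      ∏ i, (Real.sqrt (2 * Real.pi * MSE θ))⁻¹ *
        Real.exp (-(y i - f θ (x i)) ^ 2 / (2 * MSE θ)))
    (hprior_nonneg : ∀ θ, 0 ≤ prior θ)
    (hprior_prob : ∫ θ, prior θ ∂μ = 1)
    (hpD : pD = ∫ θ, like θ * prior θ ∂μ)
    (hpD_pos : 0 < pD)
    (hpost : ∀ θ, post θ = like θ * prior θ / pD)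
    (hθD : ∀ θ, like θ ≤ like θD)
    (hint1 : Integrable (fun θ => like θ * prior θ) μ)
    (hint2 : Integrable (fun θ => prior θ * Real.log (MSE θ)) μ)
    (hint3 : Integrable (fun θ => post θ * Real.log (post θ / prior θ)) μ) :
    (∀ θ, Real.log (like θ) =
        -((n : ℝ) / 2) * Real.log (MSE θ)
          + (-((n : ℝ) / 2) - ((n : ℝ) / 2) * Real.log (2 * Real.pi))) ∧
    (2 / (n : ℝ)) * (∫ θ, post θ * Real.log (post θ / prior θ) ∂μ)
      ≤ (∫ θ, prior θ * Real.log (MSE θ) ∂μ) - Real.log (MSE θD) := by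
  have hloglike : ∀ θ, Real.log (like θ) = -((n : ℝ) / 2) * Real.log (MSE θ)
      + (-((n : ℝ) / 2) - ((n : ℝ) / 2) * Real.log (2 * Real.pi)) := fun θ => by
    simpa [hlike θ] using log_prod_gaussian_density_of_mean_sq (hMSE_pos θ)
      (fun i => y i - f θ (x i)) (by simpa using hMSE θ)
  refine ⟨hloglike, ?_⟩
  have hlike_pos : ∀ θ, 0 < like θ := fun θ => by
    have := hMSE_pos θ
    rw [hlike θ]
    positivity
  have hprior_int : Integrable prior μ := .of_integral_ne_zero (by simp [hprior_prob])
  have hpost_eq : post = posterior μ prior like := by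
    ext θ
    rw [hpost, hpD, posterior]
  subst hpD
  rw [hpost_eq] at hint3 ⊢
  have hKL := integral_posterior_mul_log_le θD hprior_nonneg hprior_prob hlike_pos hθD hpD_pos
    hint1 (by simp_rw [hloglike]; exact integrable_mul_affine hprior_int hint2 _ _) hint3
  simp_rw [hloglike, integral_mul_affine hprior_prob hint2] at hKL
  have hn' : (0 : ℝ) < n := Nat.cast_pos.2 hn
  rw [div_mul_eq_mul_div, div_le_iff₀ hn']
  linarith
end
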